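/- arXiv:2304.13984 — 3 statements merged into one kernel-verified Lean document; each statement's English description precedes it below -/
import Mathlib

section
/- A laminar matroid satisfies the exchange property: if $(S,\mathcal{I}_{\mathcal{F},k})$ is a laminar matroid and $A,B \in \mathcal{I}_{\mathcal{F},k}$ with $|A| > |B|$, then there exists $e \in A \setminus B$ such that $B \cup \{e\} \in \mathcal{I}_{\mathcal{F},k}$. -/
open Finset

variable {α : Type*} [DecidableEq α]

/-- A laminar family on a finite set `S`: nonempty subsets of `S`,
any two of which are disjoint or nested. -/
def IsLaminar (S : Finset α) (F : Finset (Finset α)) : Prop :=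
  (∀ X ∈ F, X ⊆ S ∧ X ≠ ∅) ∧
  ∀ X ∈ F, ∀ Y ∈ F, X ∩ Y = ∅ ∨ X ⊆ Y ∨ Y ⊆ X

/-- Independent sets of the laminar matroid `(S, I_{F,k})`. -/
def Indep (S : Finset α) (F : Finset (Finset α)) (k : Finset α → ℕ) (A : Finset α) : Prop :=
  A ⊆ S ∧ ∀ Y ∈ F, (A ∩ Y).card ≤ k Y

theorem laminar_exchange (S : Finset α) (F : Finset (Finset α)) (k : Finset α → ℕ)
    (hF : IsLaminar S F) (hk : ∀ Y ∈ F, 0 < k Y) (A B : Finset α)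
    (hA : Indep S F k A) (hB : Indep S F k B) (hcard : B.card < A.card) :
    ∃ e ∈ A \ B, Indep S F k (insert e B) := by
  by_contra hcon
  push_neg at hcon
  -- For each e ∈ A \ B, find a maximal tight set containing e.
  have key : ∀ e : α, ∃ Y : Finset α, e ∈ A \ B →
      Y ∈ F ∧ e ∈ Y ∧ k Y ≤ (B ∩ Y).card ∧
      ∀ Z ∈ F, e ∈ Z → k Z ≤ (B ∩ Z).card → Z ⊆ Y := by
    intro e
    by_cases he : e ∈ A \ B
    · obtain ⟨heA, heB⟩ := Finset.mem_sdiff.mp he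
      have hins : ¬ Indep S F k (insert e B) := hcon e he
      have hsub : insert e B ⊆ S := by
        intro x hx
        rcases Finset.mem_insert.mp hx with rfl | hx
        · exact hA.1 heA
        · exact hB.1 hx
      have hex : ∃ Y ∈ F, ¬ ((insert e B ∩ Y).card ≤ k Y) := by
        by_contra h
        push_neg at h
        exact hins ⟨hsub, h⟩
      obtain ⟨Y, hYF, hY⟩ := hex
      push_neg at hY
      have heY : e ∈ Y := by
        by_contra heY
        have heq : insert e B ∩ Y = B ∩ Y := by
          ext x
          simp only [Finset.mem_inter, Finset.mem_insert]
          constructor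
          · rintro ⟨rfl | hx, hxY⟩
            · exact absurd hxY heY
            · exact ⟨hx, hxY⟩
          · rintro ⟨hx, hxY⟩; exact ⟨Or.inr hx, hxY⟩
        rw [heq] at hY
        exact absurd (hB.2 Y hYF) (not_le.mpr hY)
      have htight : k Y ≤ (B ∩ Y).card := by
        have heq : insert e B ∩ Y = insert e (B ∩ Y) := by
          ext x
          simp only [Finset.mem_inter, Finset.mem_insert]
          constructor
          · rintro ⟨rfl | hx, hxY⟩
            · exact Or.inl rfl
            · exact Or.inr ⟨hx, hxY⟩
          · rintro (rfl | ⟨hx, hxY⟩)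
            · exact ⟨Or.inl rfl, heY⟩
            · exact ⟨Or.inr hx, hxY⟩
        have henB : e ∉ B ∩ Y := fun h => heB (Finset.mem_inter.mp h).1
        rw [heq, Finset.card_insert_of_notMem henB] at hY
        omega
      set Fe := F.filter (fun Z => e ∈ Z ∧ k Z ≤ (B ∩ Z).card) with hFe
      have hne : Fe.Nonempty := ⟨Y, Finset.mem_filter.mpr ⟨hYF, heY, htight⟩⟩
      obtain ⟨W, hWFe, hWmax⟩ := Finset.exists_max_image Fe Finset.card hne
      obtain ⟨hWF, heW, hWt⟩ := Finset.mem_filter.mp hWFe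
      refine ⟨W, fun _ => ⟨hWF, heW, hWt, ?_⟩⟩
      intro Z hZF heZ hZt
      have hZFe : Z ∈ Fe := Finset.mem_filter.mpr ⟨hZF, heZ, hZt⟩
      rcases hF.2 Z hZF W hWF with hdis | hsub | hsub
      · exfalso
        have : e ∈ Z ∩ W := Finset.mem_inter.mpr ⟨heZ, heW⟩
        rw [hdis] at this
        exact absurd this (Finset.notMem_empty e)
      · exact hsub
      · have heq := Finset.eq_of_subset_of_card_le hsub (hWmax Z hZFe)
        intro x hx
        rw [heq]
        exact hx
    · exact ⟨∅, fun h => absurd h he⟩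
  choose M hM using key
  set T := (A \ B).image M with hT
  -- distinct maximal tight sets are disjoint
  have hdisj : ∀ t ∈ T, ∀ t' ∈ T, t ≠ t' → Disjoint t t' := by
    intro t ht t' ht' hne
    obtain ⟨e, he, rfl⟩ := Finset.mem_image.mp ht
    obtain ⟨e', he', rfl⟩ := Finset.mem_image.mp ht'
    obtain ⟨hMF, heM, hMt, hMmax⟩ := hM e he
    obtain ⟨hMF', heM', hMt', hMmax'⟩ := hM e' he'
    rcases hF.2 (M e) hMF (M e') hMF' with hdis | hsub | hsub
    · rw [Finset.disjoint_iff_inter_eq_empty]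
      exact hdis
    · exfalso
      exact hne (Finset.Subset.antisymm hsub (hMmax (M e') hMF' (hsub heM) hMt'))
    · exfalso
      exact hne (Finset.Subset.antisymm (hMmax' (M e) hMF (hsub heM') hMt) hsub)
  -- A \ B is covered by T
  have hcover : A \ B = T.biUnion (fun t => (A \ B) ∩ t) := by
    apply Finset.Subset.antisymm
    · intro e he
      exact Finset.mem_biUnion.mpr ⟨M e, Finset.mem_image_of_mem M he,
        Finset.mem_inter.mpr ⟨he, (hM e he).2.1⟩⟩
    · intro e he
      obtain ⟨t, _, he'⟩ := Finset.mem_biUnion.mp he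
      exact (Finset.mem_inter.mp he').1
  have hcard1 : (A \ B).card = ∑ t ∈ T, ((A \ B) ∩ t).card := by
    conv_lhs => rw [hcover]
    exact Finset.card_biUnion fun x hx y hy hxy =>
      Finset.disjoint_of_subset_left Finset.inter_subset_right
        (Finset.disjoint_of_subset_right Finset.inter_subset_right (hdisj x hx y hy hxy))
  -- termwise inequality
  have hterm : ∀ t ∈ T, ((A \ B) ∩ t).card ≤ ((B \ A) ∩ t).card := by
    intro t ht
    obtain ⟨e, he, rfl⟩ := Finset.mem_image.mp ht
    obtain ⟨hMF, heM, hMt, _⟩ := hM e he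
    have hAle : (A ∩ M e).card ≤ (B ∩ M e).card := le_trans (hA.2 (M e) hMF) hMt
    have e1 : (A \ B) ∩ M e = (A ∩ M e) \ B := by
      ext x
      simp only [Finset.mem_inter, Finset.mem_sdiff]
      tauto
    have e2 : (B \ A) ∩ M e = (B ∩ M e) \ A := by
      ext x
      simp only [Finset.mem_inter, Finset.mem_sdiff]
      tauto
    have c1 := Finset.card_sdiff_add_card_inter (A ∩ M e) B
    have c2 := Finset.card_sdiff_add_card_inter (B ∩ M e) A
    have e3 : (A ∩ M e) ∩ B = (B ∩ M e) ∩ A := by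
      ext x
      simp only [Finset.mem_inter]
      tauto
    rw [e1, e2]
    rw [e3] at c1
    omega
  have hcard2 : ∑ t ∈ T, ((B \ A) ∩ t).card ≤ (B \ A).card := by
    have := Finset.card_biUnion (s := T) (t := fun t => (B \ A) ∩ t)
      (fun x hx y hy hxy =>
        Finset.disjoint_of_subset_left Finset.inter_subset_right
          (Finset.disjoint_of_subset_right Finset.inter_subset_right (hdisj x hx y hy hxy)))
    rw [← this]
    apply Finset.card_le_card
    intro x hx
    obtain ⟨t, _, hx'⟩ := Finset.mem_biUnion.mp hx
    exact (Finset.mem_inter.mp hx').1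
  have hfinal : (A \ B).card ≤ (B \ A).card :=
    le_trans (hcard1 ▸ Finset.sum_le_sum hterm) hcard2
  have cA := Finset.card_sdiff_add_card_inter A B
  have cB := Finset.card_sdiff_add_card_inter B A
  have : A ∩ B = B ∩ A := Finset.inter_comm A B
  have : (A ∩ B).card = (B ∩ A).card := by rw [this]
  omega
end

section
/- Let $I = (S,\mathcal{F},k,c,p,B)$ be a BLM instance with maximal set $X \in \mathcal{F}\setminus\{S\}$, and define $\mathrm{DP}_I(q,t) = \min\{c(Q) : Q \in \mathcal{I}_{\mathcal{F},k},\ |Q|=q,\ p(Q)=t\}$ (with $\min \emptyset = \infty$), and similarly $\mathrm{DP}_{I\cap X}$ and $\mathrm{DP}_{I\setminus X}$ for the restricted instances $I \cap X$ and $I \setminus X$. Then for all $q \le k(S)$ and all $t$: $$\mathrm{DP}_I(q,t) = \min_{\substack{q_1+q_2=q\\ t_1+t_2=t}} \left(\mathrm{DP}_{I\cap X}(q_1,t_1) + \mathrm{DP}_{I\setminus X}(q_2,t_2)\right),$$ and $\mathrm{DP}_I(q,t) = \infty$ when $q > k(S)$. -/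
open Finset

variable {α : Type*} [DecidableEq α]

/-- The dynamic-programming table: minimum cost of an independent set with
exactly `q` elements and profit exactly `t` (infinity if none exists). -/
noncomputable def DP (S : Finset α) (F : Finset (Finset α)) (k : Finset α → ℕ)
    (c p : α → ℕ) (q t : ℕ) : ℕ∞ :=
  sInf {x : ℕ∞ | ∃ Q : Finset α, Indep S F k Q ∧ Q.card = q ∧
    ∑ e ∈ Q, p e = t ∧ x = (∑ e ∈ Q, c e : ℕ)}

/-- Splitting an independent set along `X`. -/
lemma indep_split (S : Finset α) (F : Finset (Finset α)) (k : Finset α → ℕ)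
    (hS : S ∈ F) (X : Finset α) (Q : Finset α) (hQ : Indep S F k Q) :
    Indep X (F.filter (· ⊆ X)) k (Q ∩ X) ∧
    Indep (S \ X) (F.filter (· ⊆ S \ X) ∪ {S \ X})
      (fun Y => if Y ∈ F then k Y else k S) (Q \ X) := by
  obtain ⟨hQS, hQk⟩ := hQ
  refine ⟨⟨inter_subset_right, ?_⟩, ⟨?_, ?_⟩⟩
  · intro Y hY
    rw [mem_filter] at hY
    have h1 : Q ∩ X ∩ Y = Q ∩ Y := by
      ext a
      simp only [mem_inter]
      exact ⟨fun h => ⟨h.1.1, h.2⟩, fun h => ⟨⟨h.1, hY.2 h.2⟩, h.2⟩⟩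
    rw [h1]; exact hQk Y hY.1
  · exact sdiff_subset_sdiff hQS (le_refl X)
  · intro Y hY
    rw [mem_union, mem_filter, mem_singleton] at hY
    rcases hY with ⟨hYF, hYX⟩ | rfl
    · have h1 : (Q \ X) ∩ Y = Q ∩ Y := by
        ext a
        simp only [mem_inter, mem_sdiff]
        constructor
        · exact fun h => ⟨h.1.1, h.2⟩
        · intro h
          have := hYX h.2
          rw [mem_sdiff] at this
          exact ⟨⟨h.1, this.2⟩, h.2⟩
      rw [h1]
      simpa only [if_pos hYF] using hQk Y hYF
    · have h1 : (Q \ X) ∩ (S \ X) = Q \ X := by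
        apply inter_eq_left.2
        exact sdiff_subset_sdiff hQS (le_refl X)
      rw [h1]
      by_cases hmem : S \ X ∈ F
      · have h2 : Q \ X = Q ∩ (S \ X) := by
          ext a
          simp only [mem_sdiff, mem_inter]
          exact ⟨fun h => ⟨h.1, hQS h.1, h.2⟩, fun h => ⟨h.1, h.2.2⟩⟩
        simp only [if_pos hmem]
        calc (Q \ X).card = (Q ∩ (S \ X)).card := by rw [← h2]
          _ ≤ k (S \ X) := hQk _ hmem
      · simp only [if_neg hmem]
        calc (Q \ X).card ≤ Q.card := card_le_card sdiff_subset
          _ = (Q ∩ S).card := by rw [inter_eq_left.2 hQS]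
          _ ≤ k S := hQk S hS

/-- Merging independent sets of the two sub-instances. -/
lemma indep_merge (S : Finset α) (F : Finset (Finset α)) (k : Finset α → ℕ)
    (hF : IsLaminar S F) (X : Finset α) (hX : X ∈ F) (hXS : X ≠ S)
    (hmax : ∀ Y ∈ F, Y ≠ S → X ⊆ Y → X = Y)
    (Q₁ Q₂ : Finset α)
    (h1 : Indep X (F.filter (· ⊆ X)) k Q₁)
    (h2 : Indep (S \ X) (F.filter (· ⊆ S \ X) ∪ {S \ X})
      (fun Y => if Y ∈ F then k Y else k S) Q₂)
    (hcard : Q₁.card + Q₂.card ≤ k S) :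
    Indep S F k (Q₁ ∪ Q₂) := by
  obtain ⟨h1S, h1k⟩ := h1
  obtain ⟨h2S, h2k⟩ := h2
  have hXsub : X ⊆ S := (hF.1 X hX).1
  have hdisj : Disjoint Q₁ Q₂ :=
    Finset.disjoint_left.2 fun a ha1 ha2 => (mem_sdiff.1 (h2S ha2)).2 (h1S ha1)
  constructor
  · exact union_subset (h1S.trans hXsub) (h2S.trans sdiff_subset)
  · intro Y hY
    by_cases hYS : Y = S
    · rw [hYS]
      have : (Q₁ ∪ Q₂) ∩ S = Q₁ ∪ Q₂ :=
        inter_eq_left.2 (union_subset (h1S.trans hXsub) (h2S.trans sdiff_subset))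
      rw [this, card_union_of_disjoint hdisj]
      exact hcard
    · -- laminar cases
      rcases hF.2 X hX Y hY with hdXY | hsub | hsub
      · -- X ∩ Y = ∅, so Y ⊆ S \ X
        have hYsub : Y ⊆ S \ X := by
          intro a ha
          rw [mem_sdiff]
          refine ⟨(hF.1 Y hY).1 ha, fun haX => ?_⟩
          have : a ∈ X ∩ Y := mem_inter.2 ⟨haX, ha⟩
          rw [hdXY] at this
          exact notMem_empty a this
        have hQ1Y : Q₁ ∩ Y = ∅ := by
          apply eq_empty_of_forall_notMem
          intro a ha
          rw [mem_inter] at ha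
          exact (mem_sdiff.1 (hYsub ha.2)).2 (h1S ha.1)
        have h3 : (Q₁ ∪ Q₂) ∩ Y = Q₂ ∩ Y := by
          rw [union_inter_distrib_right, hQ1Y, empty_union]
        rw [h3]
        have := h2k Y (mem_union.2 (Or.inl (mem_filter.2 ⟨hY, hYsub⟩)))
        simpa [if_pos hY] using this
      · -- X ⊆ Y, so by maximality X = Y, reduce to Y ⊆ X
        have hXY : X = Y := hmax Y hY hYS hsub
        subst hXY
        have hQ2Y : Q₂ ∩ X = ∅ := by
          apply eq_empty_of_forall_notMem
          intro a ha
          rw [mem_inter] at ha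
          exact (mem_sdiff.1 (h2S ha.1)).2 ha.2
        have h3 : (Q₁ ∪ Q₂) ∩ X = Q₁ ∩ X := by
          rw [union_inter_distrib_right, hQ2Y, union_empty]
        rw [h3]
        exact h1k X (mem_filter.2 ⟨hX, le_refl X⟩)
      · -- Y ⊆ X
        have hQ2Y : Q₂ ∩ Y = ∅ := by
          apply eq_empty_of_forall_notMem
          intro a ha
          rw [mem_inter] at ha
          exact (mem_sdiff.1 (h2S ha.1)).2 (hsub ha.2)
        have h3 : (Q₁ ∪ Q₂) ∩ Y = Q₁ ∩ Y := by
          rw [union_inter_distrib_right, hQ2Y, union_empty]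
        rw [h3]
        exact h1k Y (mem_filter.2 ⟨hY, hsub⟩)

theorem DP_recurrence (S : Finset α) (F : Finset (Finset α)) (k : Finset α → ℕ)
    (c p : α → ℕ)
    (hF : IsLaminar S F) (hS : S ∈ F) (hk : ∀ Y ∈ F, 0 < k Y)
    (X : Finset α) (hX : X ∈ F) (hXS : X ≠ S)
    (hmax : ∀ Y ∈ F, Y ≠ S → X ⊆ Y → X = Y) (q t : ℕ) :
    (q ≤ k S →
      DP S F k c p q t =
      sInf {x : ℕ∞ | ∃ q₁ q₂ t₁ t₂ : ℕ, q₁ + q₂ = q ∧ t₁ + t₂ = t ∧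
        x = DP X (F.filter (· ⊆ X)) k c p q₁ t₁
          + DP (S \ X) (F.filter (· ⊆ S \ X) ∪ {S \ X})
              (fun Y => if Y ∈ F then k Y else k S) c p q₂ t₂}) ∧
    (k S < q → DP S F k c p q t = ⊤) := by
  constructor
  · intro hq
    apply le_antisymm
    · -- DP ≤ sInf RHS
      apply le_sInf
      rintro x ⟨q₁, q₂, t₁, t₂, hq12, ht12, rfl⟩
      set D1 := DP X (F.filter (· ⊆ X)) k c p q₁ t₁ with hD1
      set D2 := DP (S \ X) (F.filter (· ⊆ S \ X) ∪ {S \ X})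
        (fun Y => if Y ∈ F then k Y else k S) c p q₂ t₂ with hD2
      by_cases h1 : D1 = ⊤
      · rw [h1, top_add]; exact le_top
      by_cases h2 : D2 = ⊤
      · rw [h2, add_top]; exact le_top
      have hne1 : {x : ℕ∞ | ∃ Q : Finset α, Indep X (F.filter (· ⊆ X)) k Q ∧ Q.card = q₁ ∧
          ∑ e ∈ Q, p e = t₁ ∧ x = (∑ e ∈ Q, c e : ℕ)}.Nonempty := by
        by_contra hc
        rw [Set.not_nonempty_iff_eq_empty] at hc
        exact h1 (by rw [hD1, DP, hc, sInf_empty])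
      have hne2 : {x : ℕ∞ | ∃ Q : Finset α, Indep (S \ X)
          (F.filter (· ⊆ S \ X) ∪ {S \ X}) (fun Y => if Y ∈ F then k Y else k S) Q ∧
          Q.card = q₂ ∧ ∑ e ∈ Q, p e = t₂ ∧ x = (∑ e ∈ Q, c e : ℕ)}.Nonempty := by
        by_contra hc
        rw [Set.not_nonempty_iff_eq_empty] at hc
        exact h2 (by rw [hD2, DP, hc, sInf_empty])
      obtain ⟨Q₁, hQ₁, hc₁, hp₁, he₁⟩ := csInf_mem hne1
      obtain ⟨Q₂, hQ₂, hc₂, hp₂, he₂⟩ := csInf_mem hne2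
      have hdisj : Disjoint Q₁ Q₂ :=
        Finset.disjoint_left.2 fun a ha1 ha2 =>
          (mem_sdiff.1 (hQ₂.1 ha2)).2 (hQ₁.1 ha1)
      have hind : Indep S F k (Q₁ ∪ Q₂) := by
        apply indep_merge S F k hF X hX hXS hmax Q₁ Q₂ hQ₁ hQ₂
        rw [hc₁, hc₂, hq12]; exact hq
      apply sInf_le
      refine ⟨Q₁ ∪ Q₂, hind, ?_, ?_, ?_⟩
      · rw [card_union_of_disjoint hdisj, hc₁, hc₂, hq12]
      · rw [sum_union hdisj, hp₁, hp₂, ht12]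
      · rw [sum_union hdisj]
        have hD1eq : D1 = ((∑ e ∈ Q₁, c e : ℕ) : ℕ∞) := by rw [hD1, DP]; exact he₁
        have hD2eq : D2 = ((∑ e ∈ Q₂, c e : ℕ) : ℕ∞) := by rw [hD2, DP]; exact he₂
        rw [hD1eq, hD2eq]
        push_cast
        ring
    · -- sInf RHS ≤ DP
      apply le_sInf
      rintro b ⟨Q, hQ, hcard, hprof, rfl⟩
      obtain ⟨hI1, hI2⟩ := indep_split S F k hS X Q hQ
      have hQeq : (Q ∩ X) ∪ (Q \ X) = Q := by
        rw [union_comm, sdiff_union_inter]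
      have hdisj' : Disjoint (Q ∩ X) (Q \ X) := by
        rw [Finset.disjoint_left]
        intro a ha hb
        exact (mem_sdiff.1 hb).2 (mem_inter.1 ha).2
      have hcards : (Q ∩ X).card + (Q \ X).card = q := by
        have h := card_union_of_disjoint hdisj'
        rw [hQeq] at h
        omega
      have hprofs : (∑ e ∈ Q ∩ X, p e) + (∑ e ∈ Q \ X, p e) = t := by
        have h := sum_union (f := p) hdisj'
        rw [hQeq] at h
        omega
      apply sInf_le_of_le (b := DP X (F.filter (· ⊆ X)) k c p (Q ∩ X).card
          (∑ e ∈ Q ∩ X, p e)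
        + DP (S \ X) (F.filter (· ⊆ S \ X) ∪ {S \ X})
            (fun Y => if Y ∈ F then k Y else k S) c p (Q \ X).card (∑ e ∈ Q \ X, p e))
      · exact ⟨(Q ∩ X).card, (Q \ X).card, ∑ e ∈ Q ∩ X, p e, ∑ e ∈ Q \ X, p e,
          hcards, hprofs, rfl⟩
      · have hle1 : DP X (F.filter (· ⊆ X)) k c p (Q ∩ X).card (∑ e ∈ Q ∩ X, p e)
            ≤ ((∑ e ∈ Q ∩ X, c e : ℕ) : ℕ∞) :=
          sInf_le ⟨Q ∩ X, hI1, rfl, rfl, rfl⟩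
        have hle2 : DP (S \ X) (F.filter (· ⊆ S \ X) ∪ {S \ X})
            (fun Y => if Y ∈ F then k Y else k S) c p (Q \ X).card (∑ e ∈ Q \ X, p e)
            ≤ ((∑ e ∈ Q \ X, c e : ℕ) : ℕ∞) :=
          sInf_le ⟨Q \ X, hI2, rfl, rfl, rfl⟩
        calc _ ≤ ((∑ e ∈ Q ∩ X, c e : ℕ) : ℕ∞) + ((∑ e ∈ Q \ X, c e : ℕ) : ℕ∞) :=
              add_le_add hle1 hle2
          _ = ((∑ e ∈ Q, c e : ℕ) : ℕ∞) := by
              rw [← Nat.cast_add]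
              congr 1
              have h := sum_union (f := c) hdisj'
              rw [hQeq] at h
              omega
  · intro hq
    rw [DP]
    convert sInf_empty
    · exact rfl
    rw [Set.eq_empty_iff_forall_notMem]
    rintro x ⟨Q, hQ, hcard, -, -⟩
    have : Q ∩ S = Q := inter_eq_left.2 hQ.1
    have hle : Q.card ≤ k S := by
      have h2 := hQ.2 S hS
      rwa [this] at h2
    omega
end

section
/- Let $S$ be a finite set and $\mathcal{F}$ a laminar family on $S$ with $S\in\mathcal{F}$ and $k:\mathcal{F}\to\mathbb{N}_{>0}$. Define the rank function $r(A) = \max\{|B| : B\subseteq A,\ B\in\mathcal{I}_{\mathcal{F},k}\}$. Then for a maximal set $X\in\mathcal{F}\setminus\{S\}$ and any $A\subseteq S$: $r(A) = \min\{k(S),\ r_1(A\cap X) + r_2(A\setminus X)\}$, where $r_1$ is the rank function of the laminar matroid on $X$ with family $\{Y\in\mathcal{F}: Y\subseteq X\}$ and $r_2$ is the rank function of the laminar matroid on $S\setminus X$ with family $\{Y\in\mathcal{F}: Y\subseteq S\setminus X\}\cup\{S\setminus X\}$ with $k(S\setminus X):=k(S)$ when $S\setminus X\notin\mathcal{F}$.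 -/
open Finset

variable {α : Type*} [DecidableEq α]

/-- Rank function of the laminar matroid. -/
noncomputable def rankF (S : Finset α) (F : Finset (Finset α)) (k : Finset α → ℕ)
    (A : Finset α) : ℕ :=
  sSup {n : ℕ | ∃ B : Finset α, B ⊆ A ∧ Indep S F k B ∧ B.card = n}

lemma rank_bdd (S : Finset α) (F : Finset (Finset α)) (k : Finset α → ℕ) (A : Finset α) :
    BddAbove {n : ℕ | ∃ B : Finset α, B ⊆ A ∧ Indep S F k B ∧ B.card = n} :=
  ⟨A.card, fun n ⟨B, hB, _, hc⟩ => hc ▸ card_le_card hB⟩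

lemma rank_exists (S : Finset α) (F : Finset (Finset α)) (k : Finset α → ℕ) (A : Finset α) :
    ∃ B : Finset α, B ⊆ A ∧ Indep S F k B ∧ B.card = rankF S F k A := by
  have h1 : ({n : ℕ | ∃ B : Finset α, B ⊆ A ∧ Indep S F k B ∧ B.card = n}).Nonempty :=
    ⟨0, ∅, empty_subset _, ⟨empty_subset _, fun Y _ => by simp⟩, card_empty⟩
  exact Nat.sSup_mem h1 (rank_bdd S F k A)

lemma le_rank {S : Finset α} {F : Finset (Finset α)} {k : Finset α → ℕ} {A B : Finset α}
    (hBA : B ⊆ A) (hB : Indep S F k B) : B.card ≤ rankF S F k A :=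
  le_csSup (rank_bdd S F k A) ⟨B, hBA, hB, rfl⟩

theorem rank_recurrence (S : Finset α) (F : Finset (Finset α)) (k : Finset α → ℕ)
    (hF : IsLaminar S F) (hS : S ∈ F) (hk : ∀ Y ∈ F, 0 < k Y)
    (X : Finset α) (hX : X ∈ F) (hXS : X ≠ S)
    (hmax : ∀ Y ∈ F, Y ≠ S → X ⊆ Y → X = Y)
    (A : Finset α) (hA : A ⊆ S) :
    rankF S F k A =
      min (k S)
        (rankF X (F.filter (· ⊆ X)) k (A ∩ X) +
         rankF (S \ X) (F.filter (· ⊆ S \ X) ∪ {S \ X})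
           (fun Y => if Y ∈ F then k Y else k S) (A \ X)) := by
  have hXsub : X ⊆ S := (hF.1 X hX).1
  -- key structural fact: any Y ∈ F other than S is inside X or inside S \ X
  have key : ∀ Y ∈ F, Y ≠ S → Y ⊆ X ∨ Y ⊆ S \ X := by
    intro Y hY hYS
    rcases hF.2 X hX Y hY with hdisj | hsub | hsub
    · right
      intro a ha
      refine mem_sdiff.2 ⟨(hF.1 Y hY).1 ha, fun haX => ?_⟩
      have : a ∈ X ∩ Y := mem_inter.2 ⟨haX, ha⟩
      simp [hdisj] at this
    · left; exact (hmax Y hY hYS hsub) ▸ subset_rfl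
    · left; exact hsub
  apply le_antisymm
  · -- r(A) ≤ min
    obtain ⟨B, hBA, hBind, hBcard⟩ := rank_exists S F k A
    rw [← hBcard]
    have hBS : B ⊆ S := hBind.1
    have hBkS : B.card ≤ k S := by
      have := hBind.2 S hS
      rwa [inter_eq_left.2 hBS] at this
    refine le_min hBkS ?_
    have hsplit : B.card = (B ∩ X).card + (B \ X).card :=
      (card_inter_add_card_sdiff B X).symm
    rw [hsplit]
    have h1 : (B ∩ X).card ≤ rankF X (F.filter (· ⊆ X)) k (A ∩ X) := by
      refine le_rank (inter_subset_inter_right hBA) ⟨inter_subset_right, ?_⟩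
      intro Y hY
      rw [mem_filter] at hY
      calc (B ∩ X ∩ Y).card ≤ (B ∩ Y).card :=
            card_le_card (inter_subset_inter_right inter_subset_left)
        _ ≤ k Y := hBind.2 Y hY.1
    have h2 : (B \ X).card ≤ rankF (S \ X) (F.filter (· ⊆ S \ X) ∪ {S \ X})
        (fun Y => if Y ∈ F then k Y else k S) (A \ X) := by
      refine le_rank (sdiff_subset_sdiff hBA subset_rfl) ⟨?_, ?_⟩
      · intro a ha
        rw [mem_sdiff] at ha ⊢
        exact ⟨hBS ha.1, ha.2⟩
      · intro Y hY
        rcases mem_union.1 hY with hY | hY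
        · rw [mem_filter] at hY
          show _ ≤ if Y ∈ F then k Y else k S
          rw [if_pos hY.1]
          calc (B \ X ∩ Y).card ≤ (B ∩ Y).card :=
              card_le_card (inter_subset_inter_right sdiff_subset)
            _ ≤ k Y := hBind.2 Y hY.1
        · rw [mem_singleton] at hY
          subst hY
          by_cases hmem : S \ X ∈ F
          · show _ ≤ if S \ X ∈ F then k (S \ X) else k S
            rw [if_pos hmem]
            calc (B \ X ∩ (S \ X)).card ≤ (B ∩ (S \ X)).card :=
                card_le_card (inter_subset_inter_right sdiff_subset)
              _ ≤ k (S \ X) := hBind.2 _ hmem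
          · show _ ≤ if S \ X ∈ F then k (S \ X) else k S
            rw [if_neg hmem]
            calc (B \ X ∩ (S \ X)).card ≤ B.card :=
                card_le_card (inter_subset_left.trans sdiff_subset)
              _ ≤ k S := hBkS
    omega
  · -- min ≤ r(A)
    obtain ⟨B1, hB1A, hB1ind, hB1card⟩ := rank_exists X (F.filter (· ⊆ X)) k (A ∩ X)
    obtain ⟨B2, hB2A, hB2ind, hB2card⟩ := rank_exists (S \ X)
      (F.filter (· ⊆ S \ X) ∪ {S \ X}) (fun Y => if Y ∈ F then k Y else k S) (A \ X)
    have hB1X : B1 ⊆ X := hB1ind.1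
    have hB2SX : B2 ⊆ S \ X := hB2ind.1
    have hdisj : Disjoint B1 B2 := by
      rw [Finset.disjoint_left]
      intro a ha1 ha2
      exact (mem_sdiff.1 (hB2SX ha2)).2 (hB1X ha1)
    have hcardU : (B1 ∪ B2).card = B1.card + B2.card := card_union_of_disjoint hdisj
    have hUA : B1 ∪ B2 ⊆ A := union_subset (hB1A.trans inter_subset_left)
      (hB2A.trans sdiff_subset)
    have hUS : B1 ∪ B2 ⊆ S :=
      union_subset (hB1X.trans hXsub) (hB2SX.trans sdiff_subset)
    -- Any subset C of B1 ∪ B2 with card ≤ k S is independent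
    have hCind : ∀ C : Finset α, C ⊆ B1 ∪ B2 → C.card ≤ k S → Indep S F k C := by
      intro C hC hCk
      refine ⟨hC.trans hUS, ?_⟩
      intro Y hY
      by_cases hYS : Y = S
      · subst hYS
        exact le_trans (card_le_card inter_subset_left) hCk
      rcases key Y hY hYS with hYX | hYSX
      · -- Y ⊆ X: C ∩ Y ⊆ B1 ∩ Y
        have hsub : C ∩ Y ⊆ B1 ∩ Y := by
          intro a ha
          rw [mem_inter] at ha ⊢
          refine ⟨?_, ha.2⟩
          rcases mem_union.1 (hC ha.1) with h | h
          · exact h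
          · exact absurd (hYX ha.2) (mem_sdiff.1 (hB2SX h)).2
        calc (C ∩ Y).card ≤ (B1 ∩ Y).card := card_le_card hsub
          _ ≤ k Y := hB1ind.2 Y (mem_filter.2 ⟨hY, hYX⟩)
      · -- Y ⊆ S \ X: C ∩ Y ⊆ B2 ∩ Y
        have hsub : C ∩ Y ⊆ B2 ∩ Y := by
          intro a ha
          rw [mem_inter] at ha ⊢
          refine ⟨?_, ha.2⟩
          rcases mem_union.1 (hC ha.1) with h | h
          · exact absurd (hB1X h) (mem_sdiff.1 (hYSX ha.2)).2
          · exact h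
        have := hB2ind.2 Y (mem_union.2 (Or.inl (mem_filter.2 ⟨hY, hYSX⟩)))
        simp only [if_pos hY] at this
        exact le_trans (card_le_card hsub) this
    by_cases hcase : B1.card + B2.card ≤ k S
    · -- B1 ∪ B2 itself independent
      have := le_rank hUA (hCind (B1 ∪ B2) subset_rfl (hcardU ▸ hcase))
      rw [hcardU] at this
      omega
    · -- truncate to k S elements
      obtain ⟨C, hCU, hCcard⟩ := Finset.exists_subset_card_eq
        (show k S ≤ (B1 ∪ B2).card by omega)
      have := le_rank (hCU.trans hUA) (hCind C hCU (le_of_eq hCcard))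
      omega
end
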